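/- Let O = I₁ × I₂ be an open rectangle in ℝ², P ∈ O, and v a C¹ vector field on O. If v is irrotational (D₁v₂ = D₂v₁ on O), then φ(x) := ∫_{Γ_x} v₁ dx₁ + v₂ dx₂, integrated along any piecewise C¹ curve Γ_x in O from P to x, is a well-defined C¹ function on O with ∇φ = v. If v is solenoidal (D₁v₁ + D₂v₂ = 0), then ψ(x) := ∫_{Γ_x} v₁ dx₂ − v₂ dx₁ is well-defined and C¹ with ∇⊥ψ = v. -/

import Mathlib

/-!
The potential is the line integral of `v₁ dx₁ + v₂ dx₂` along the corner path from `P` that runs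
first horizontally, then vertically. Green's theorem on the rectangle spanned by `P` and `x`, whose
integrand `D₁v₂ - D₂v₁` vanishes, shows that it equals the integral along the other corner path.
Differentiating the first expression in `x₂` and the second in `x₁` by the one-variable
fundamental theorem of calculus gives the partial derivatives `v₂` and `v₁`; these are continuous,
so the potential is `C¹` with gradient `v`. The gradient theorem along `Γ_x` identifies the potential with every line integral,
and the solenoidal case is the irrotational one for the rotated field `-perp v`, whose curl is
`div v`.
-/

open MeasureTheory Real Filter
open scoped Topology ENNReal

noncomputable section

/-- The plane `ℝ²`. -/
abbrev E2 : Type := EuclideanSpace ℝ (Fin 2)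

/-- Euclidean dot product on `ℝ²`. -/
def dot (a b : E2) : ℝ := inner ℝ a b

/-- Rotation by `-π/2` : `perp (w₁,w₂) = (w₂, -w₁)`; `perp (gradient ψ) = ∇^⊥ ψ`. -/
def perp (w : E2) : E2 := WithLp.toLp 2 ![w 1, -(w 0)]

/-- Lebesgue measure restricted to `Ω`. -/
def μΩ (Ω : Set E2) : Measure E2 := volume.restrict Ω

/-- `C_c^n` test functions supported inside `Ω`. -/
def IsTest (Ω : Set E2) (n : ℕ) (χ : E2 → ℝ) : Prop :=
  ContDiff ℝ n χ ∧ HasCompactSupport χ ∧ tsupport χ ⊆ Ω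

/-- `g` is a weak gradient of `u` on `Ω`. -/
def HasWeakGradOn (Ω : Set E2) (u : E2 → ℝ) (g : E2 → E2) : Prop :=
  ∀ χ : E2 → ℝ, IsTest Ω 1 χ →
    ∫ x in Ω, u x • gradient χ x = - ∫ x in Ω, χ x • g x

/-- Membership in `H¹(Ω)`: `u ∈ L²(Ω)` with weak gradient `g ∈ L²(Ω;ℝ²)`. -/
def MemH1 (Ω : Set E2) (u : E2 → ℝ) (g : E2 → E2) : Prop :=
  MemLp u 2 (μΩ Ω) ∧ MemLp g 2 (μΩ Ω) ∧ HasWeakGradOn Ω u g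

/-- Membership in `H¹_m(Ω)`, the mean-zero subspace of `H¹(Ω)`. -/
def MemH1m (Ω : Set E2) (u : E2 → ℝ) (g : E2 → E2) : Prop :=
  MemH1 Ω u g ∧ ∫ x in Ω, u x = 0

/-- Membership in `H¹₀(Ω)`: an `H¹` function which is an `H¹`-limit of smooth
compactly supported functions in `Ω`. -/
def MemH10 (Ω : Set E2) (u : E2 → ℝ) (g : E2 → E2) : Prop :=
  MemH1 Ω u g ∧
  ∃ φ : ℕ → E2 → ℝ, (∀ n, IsTest Ω 1 (φ n)) ∧
    Tendsto (fun n => ∫ x in Ω,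
        ((u x - φ n x) ^ 2 + ‖g x - gradient (φ n) x‖ ^ 2)) atTop (𝓝 0)

/-- `v` is irrotational on `Ω` (weakly, `curl v = 0`). -/
def Irrotational (Ω : Set E2) (v : E2 → E2) : Prop :=
  ∀ χ : E2 → ℝ, IsTest Ω 1 χ → ∫ x in Ω, dot (perp (gradient χ x)) (v x) = 0

/-- `v` is solenoidal on `Ω` (weakly, `div v = 0`). -/
def Solenoidal (Ω : Set E2) (v : E2 → E2) : Prop :=
  ∀ χ : E2 → ℝ, IsTest Ω 1 χ → ∫ x in Ω, dot (gradient χ x) (v x) = 0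

/-- `div v = ρ` weakly on `Ω`. -/
def HasWeakDiv (Ω : Set E2) (v : E2 → E2) (ρ : E2 → ℝ) : Prop :=
  ∀ χ : E2 → ℝ, IsTest Ω 1 χ →
    ∫ x in Ω, dot (gradient χ x) (v x) = - ∫ x in Ω, ρ x * χ x

/-- `curl v = ω` weakly on `Ω`. -/
def HasWeakCurl (Ω : Set E2) (v : E2 → E2) (ω : E2 → ℝ) : Prop :=
  ∀ χ : E2 → ℝ, IsTest Ω 1 χ →
    ∫ x in Ω, dot (perp (gradient χ x)) (v x) = ∫ x in Ω, ω x * χ x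

/-- A bounded planar Lipschitz domain (condition (B1): bounded, connected, open;
the Lipschitz-loop structure of the boundary is recorded as nonempty interior-free
frontier data and is not further formalized). -/
def IsB1Domain (Ω : Set E2) : Prop :=
  IsOpen Ω ∧ IsConnected Ω ∧ Bornology.IsBounded Ω

/-- A piecewise-`C¹` curve on `[0,1]`: continuous, and differentiable off a finite set,
with integrable line-element pairing against `v`. -/
def IsPiecewiseC1 (γ : ℝ → E2) : Prop :=
  ContinuousOn γ (Set.Icc 0 1) ∧
  ∃ S : Finset ℝ, ∀ t ∈ Set.Icc (0:ℝ) 1, t ∉ S → DifferentiableAt ℝ γ t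

/-- An admissible curve in `O` from `P` to `x`. -/
def IsCurveIn (O : Set E2) (P x : E2) (γ : ℝ → E2) : Prop :=
  IsPiecewiseC1 γ ∧ (∀ t ∈ Set.Icc (0:ℝ) 1, γ t ∈ O) ∧ γ 0 = P ∧ γ 1 = x


open Set Filter intervalIntegral ContinuousLinearMap

section CornerPath

variable {E : Type*} [NormedAddCommGroup E] [NormedSpace ℝ E]
  {I J : Set ℝ} {F G : ℝ × ℝ → E} {p x : ℝ × ℝ}

theorem hasDerivAt_integral_of_continuousOn [CompleteSpace E] {f : ℝ → E} (hJ : IsOpen J)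
    (hJ' : J.OrdConnected) (hf : ContinuousOn f J) {a b : ℝ} (ha : a ∈ J) (hb : b ∈ J) :
    HasDerivAt (fun u => ∫ t in a..u, f t) (f b) b :=
  integral_hasDerivAt_right (hf.mono (hJ'.uIcc_subset ha hb)).intervalIntegrable
    (hf.stronglyMeasurableAtFilter hJ b hb) (hf.continuousAt (hJ.mem_nhds hb))

def cornerPathIntegral (F G : ℝ × ℝ → E) (p x : ℝ × ℝ) : E :=
  (∫ t in p.1..x.1, F (t, p.2)) + ∫ s in p.2..x.2, G (x.1, s)

theorem cornerPathIntegral_eq_of_curl_eq_zero (hI : IsOpen I) (hI' : I.OrdConnected)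
    (hJ : IsOpen J) (hJ' : J.OrdConnected)
    (hF : DifferentiableOn ℝ F (I ×ˢ J)) (hG : DifferentiableOn ℝ G (I ×ˢ J))
    (hcurl : ∀ y ∈ (I ×ˢ J : Set (ℝ × ℝ)), fderiv ℝ G y (1, 0) = fderiv ℝ F y (0, 1))
    (hp : p ∈ I ×ˢ J) (hx : x ∈ I ×ˢ J) :
    cornerPathIntegral F G p x = (∫ s in p.2..x.2, G (p.1, s)) + ∫ t in p.1..x.1, F (t, x.2) := by
  have hR : uIcc p.1 x.1 ×ˢ uIcc p.2 x.2 ⊆ I ×ˢ J :=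
    prod_mono (hI'.uIcc_subset hp.1 hx.1) (hJ'.uIcc_subset hp.2 hx.2)
  have hderiv {f : ℝ × ℝ → E} (hf : DifferentiableOn ℝ f (I ×ˢ J)) (y : ℝ × ℝ)
      (hy : y ∈ Ioo (min p.1 x.1) (max p.1 x.1) ×ˢ Ioo (min p.2 x.2) (max p.2 x.2)) :
      HasFDerivAt f (fderiv ℝ f y) y :=
    (hf.differentiableAt ((hI.prod hJ).mem_nhds
      (hR ⟨Ioo_subset_Icc_self hy.1, Ioo_subset_Icc_self hy.2⟩))).hasFDerivAt
  have hdiv : EqOn (fun y => fderiv ℝ G y (1, 0) + (-fderiv ℝ F y) (0, 1)) 0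
      (uIcc p.1 x.1 ×ˢ uIcc p.2 x.2) := fun y hy => by
    simp [hcurl y (hR hy)]
  have hgreen := integral2_divergence_prod_of_hasFDerivAt G (-F) (fderiv ℝ G)
    (fun y => -fderiv ℝ F y) p.1 p.2 x.1 x.2 (hG.continuousOn.mono hR)
    (hF.continuousOn.neg.mono hR) (hderiv hG) (fun y hy => (hderiv hF y hy).neg)
    (integrableOn_zero.congr_fun hdiv.symm (measurableSet_uIcc.prod measurableSet_uIcc))
  have hflux : (∫ t in p.1..x.1, ∫ s in p.2..x.2,
      fderiv ℝ G (t, s) (1, 0) + (-fderiv ℝ F (t, s)) (0, 1)) = 0 := by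
    refine (integral_congr fun t ht => ?_).trans integral_zero
    exact (integral_congr fun s hs => hdiv ⟨ht, hs⟩).trans integral_zero
  rw [hflux] at hgreen
  simp only [Pi.neg_apply, intervalIntegral.integral_neg] at hgreen
  rw [cornerPathIntegral, ← sub_eq_zero, hgreen]
  abel

theorem hasDerivAt_cornerPathIntegral_snd [CompleteSpace E] (hJ : IsOpen J)
    (hJ' : J.OrdConnected) (hG : ContinuousOn G (I ×ˢ J)) (hp : p.2 ∈ J) (hx : x ∈ I ×ˢ J) :
    HasDerivAt (fun s => cornerPathIntegral F G p (x.1, s)) (G x) x.2 := by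
  have hslice : ContinuousOn (fun s => G (x.1, s)) J :=
    hG.comp (by fun_prop) fun s hs => ⟨hx.1, hs⟩
  exact (hasDerivAt_integral_of_continuousOn hJ hJ' hslice hp hx.2).const_add
    (∫ t in p.1..x.1, F (t, p.2))

theorem hasDerivAt_cornerPathIntegral_fst [CompleteSpace E] (hI : IsOpen I)
    (hI' : I.OrdConnected) (hJ : IsOpen J) (hJ' : J.OrdConnected)
    (hF : DifferentiableOn ℝ F (I ×ˢ J)) (hG : DifferentiableOn ℝ G (I ×ˢ J))
    (hcurl : ∀ y ∈ (I ×ˢ J : Set (ℝ × ℝ)), fderiv ℝ G y (1, 0) = fderiv ℝ F y (0, 1))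
    (hp : p ∈ I ×ˢ J) (hx : x ∈ I ×ˢ J) :
    HasDerivAt (fun t => cornerPathIntegral F G p (t, x.2)) (F x) x.1 := by
  have hslice : ContinuousOn (fun t => F (t, x.2)) I :=
    hF.continuousOn.comp (by fun_prop) fun t ht => ⟨ht, hx.2⟩
  refine ((hasDerivAt_integral_of_continuousOn hI hI' hslice hp.1 hx.1).const_add
    (∫ s in p.2..x.2, G (p.1, s))).congr_of_eventuallyEq ?_
  filter_upwards [hI.mem_nhds hx.1] with t ht
  exact cornerPathIntegral_eq_of_curl_eq_zero hI hI' hJ hJ' hF hG hcurl hp ⟨ht, hx.2⟩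

theorem hasStrictFDerivAt_cornerPathIntegral [CompleteSpace E] (hI : IsOpen I)
    (hI' : I.OrdConnected) (hJ : IsOpen J) (hJ' : J.OrdConnected)
    (hF : DifferentiableOn ℝ F (I ×ˢ J)) (hG : DifferentiableOn ℝ G (I ×ˢ J))
    (hcurl : ∀ y ∈ (I ×ˢ J : Set (ℝ × ℝ)), fderiv ℝ G y (1, 0) = fderiv ℝ F y (0, 1))
    (hp : p ∈ I ×ˢ J) (hx : x ∈ I ×ˢ J) :
    HasStrictFDerivAt (cornerPathIntegral F G p)
      ((toSpanSingleton ℝ (F x)).coprod (toSpanSingleton ℝ (G x))) x := by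
  have hU : I ×ˢ J ∈ 𝓝 x := (hI.prod hJ).mem_nhds hx
  have hspan {f : ℝ × ℝ → E} (hf : DifferentiableOn ℝ f (I ×ˢ J)) :
      ContinuousAt (fun y => toSpanSingleton ℝ (f y)) x :=
    (toSpanSingletonCLE (𝕜 := ℝ)).continuous.continuousAt.comp
      (hf.continuousOn.continuousAt hU)
  exact hasStrictFDerivAt_uncurry_coprod
    (f := fun t s => cornerPathIntegral F G p (t, s))
    (f₁ := fun t s => toSpanSingleton ℝ (F (t, s)))
    (f₂ := fun t s => toSpanSingleton ℝ (G (t, s)))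
    (eventually_of_mem hU fun y hy =>
      hasDerivAt_cornerPathIntegral_fst hI hI' hJ hJ' hF hG hcurl hp hy)
    (eventually_of_mem hU fun y hy =>
      hasDerivAt_cornerPathIntegral_snd hJ hJ' hG.continuousOn hp.2 hy)
    (hspan hF) (hspan hG)

end CornerPath

def E2.toProd : E2 ≃L[ℝ] ℝ × ℝ :=
  (EuclideanSpace.equiv (Fin 2) ℝ).trans (ContinuousLinearEquiv.finTwoArrow ℝ ℝ)

@[simp] theorem E2.toProd_apply (x : E2) : E2.toProd x = (x 0, x 1) := rfl

@[simp] theorem E2.toProd_symm_apply_zero (q : ℝ × ℝ) : E2.toProd.symm q 0 = q.1 := rfl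

@[simp] theorem E2.toProd_symm_apply_one (q : ℝ × ℝ) : E2.toProd.symm q 1 = q.2 := rfl

theorem exists_hasGradientAt_of_curl_eq_zero {I J : Set ℝ} (hI : IsOpen I) (hI' : I.OrdConnected)
    (hJ : IsOpen J) (hJ' : J.OrdConnected) {v : E2 → E2}
    (hv : DifferentiableOn ℝ v {x | x 0 ∈ I ∧ x 1 ∈ J})
    (hcurl : ∀ x ∈ {x : E2 | x 0 ∈ I ∧ x 1 ∈ J},
      fderiv ℝ (fun y => v y 1) x (EuclideanSpace.single 0 1)
        = fderiv ℝ (fun y => v y 0) x (EuclideanSpace.single 1 1))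
    {P : E2} (hP : P ∈ {x : E2 | x 0 ∈ I ∧ x 1 ∈ J}) :
    ∃ φ : E2 → ℝ, φ P = 0 ∧ ∀ x ∈ {x : E2 | x 0 ∈ I ∧ x 1 ∈ J}, HasGradientAt φ (v x) x := by
  set e := E2.toProd
  have hcomp (i : Fin 2) : DifferentiableOn ℝ (fun q => v (e.symm q) i) (I ×ˢ J) :=
    (differentiableOn_euclidean.1 hv i).comp e.symm.differentiableOn fun _ hq => hq
  have hcurl' : ∀ q ∈ (I ×ˢ J : Set (ℝ × ℝ)),
      fderiv ℝ (fun q => v (e.symm q) 1) q (1, 0)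
        = fderiv ℝ (fun q => v (e.symm q) 0) q (0, 1) := by
    intro q hq
    have h := hcurl (e.symm q) hq
    have h10 : e.symm (1, 0) = EuclideanSpace.single 0 1 := by
      ext i; fin_cases i <;> simp [e]
    have h01 : e.symm (0, 1) = EuclideanSpace.single 1 1 := by
      ext i; fin_cases i <;> simp [e]
    rw [← Function.comp_def (fun y => v y 1), ← Function.comp_def (fun y => v y 0),
      e.symm.comp_right_fderiv, e.symm.comp_right_fderiv]
    simpa [h10, h01] using h
  refine ⟨fun y =>
    cornerPathIntegral (fun q => v (e.symm q) 0) (fun q => v (e.symm q) 1) (e P) (e y),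
    by simp [cornerPathIntegral], fun x hx => ?_⟩
  have h := (hasStrictFDerivAt_cornerPathIntegral (p := e P) (x := e x) hI hI' hJ hJ' (hcomp 0)
    (hcomp 1) hcurl' hP hx).hasFDerivAt.comp x e.hasFDerivAt
  rw [e.symm_apply_apply] at h
  rw [hasGradientAt_iff_hasFDerivAt]
  refine h.congr_fderiv ?_
  ext w
  simp [e, inner, Fin.sum_univ_two]

theorem contDiffOn_one_of_hasGradientAt {F : Type*} [NormedAddCommGroup F] [InnerProductSpace ℝ F]
    [CompleteSpace F] {s : Set F} {f : F → ℝ} {g : F → F} (hs : IsOpen s)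
    (hf : ∀ x ∈ s, HasGradientAt f (g x) x) (hg : ContinuousOn g s) : ContDiffOn ℝ 1 f s := by
  rw [← zero_add 1, contDiffOn_succ_iff_fderiv_of_isOpen hs, contDiffOn_zero]
  refine ⟨fun x hx => (hf x hx).differentiableAt.differentiableWithinAt, by simp, ?_⟩
  exact ((InnerProductSpace.toDual ℝ F).continuous.comp_continuousOn hg).congr fun x hx =>
    (hasGradientAt_iff_hasFDerivAt.1 (hf x hx)).fderiv

theorem integral_dot_deriv_eq_sub_of_isCurveIn {O : Set E2} {φ : E2 → ℝ} {g : E2 → E2}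
    {P x : E2} {γ : ℝ → E2} (hφ : ∀ y ∈ O, HasGradientAt φ (g y) y) (hγ : IsCurveIn O P x γ)
    (hint : IntervalIntegrable (fun t => dot (g (γ t)) (deriv γ t)) volume 0 1) :
    ∫ t in (0:ℝ)..1, dot (g (γ t)) (deriv γ t) = φ x - φ P := by
  obtain ⟨⟨hcont, S, hS⟩, hmem, rfl, rfl⟩ := hγ
  refine integral_eq_of_hasDerivAt_off_countable_of_le (φ ∘ γ) _ zero_le_one S.countable_toSet
    ((continuousOn_of_forall_continuousAt fun y hy => (hφ y hy).continuousAt).comp hcont hmem)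
    (fun t ht => ?_) hint
  have htIcc := Ioo_subset_Icc_self ht.1
  exact (hasGradientAt_iff_hasFDerivAt.1 (hφ _ (hmem t htIcc))).comp_hasDerivAt t
    (hS t htIcc ht.2).hasDerivAt

@[simp] theorem perp_apply_zero (w : E2) : perp w 0 = w 1 := rfl

@[simp] theorem perp_apply_one (w : E2) : perp w 1 = -w 0 := rfl

theorem perp_neg_perp (w : E2) : perp (-perp w) = w := by
  ext i; fin_cases i <;> simp

theorem dot_neg_perp (a b : E2) : dot (-perp a) b = dot a (perp b) := by
  simp [dot, inner, Fin.sum_univ_two]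

theorem DifferentiableOn.neg_perp {s : Set E2} {v : E2 → E2} (hv : DifferentiableOn ℝ v s) :
    DifferentiableOn ℝ (fun y => -perp (v y)) s := by
  refine differentiableOn_euclidean.2 fun i => ?_
  fin_cases i
  · simpa using (differentiableOn_euclidean.1 hv 1).neg
  · simpa using differentiableOn_euclidean.1 hv 0

theorem fderiv_neg_perp_comm_of_div_eq_zero {v : E2 → E2} {x : E2}
    (hdiv : fderiv ℝ (fun y => v y 0) x (EuclideanSpace.single 0 1)
        + fderiv ℝ (fun y => v y 1) x (EuclideanSpace.single 1 1) = 0) :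
    fderiv ℝ (fun y => (-perp (v y)) 1) x (EuclideanSpace.single 0 1)
      = fderiv ℝ (fun y => (-perp (v y)) 0) x (EuclideanSpace.single 1 1) := by
  simp only [PiLp.neg_apply, perp_apply_zero, perp_apply_one, neg_neg, fderiv_fun_neg, neg_apply]
  linear_combination hdiv

theorem stmt9_general (a₁ b₁ a₂ b₂ : ℝ)
    (O : Set E2) (hO : O = {x : E2 | x 0 ∈ Set.Ioo a₁ b₁ ∧ x 1 ∈ Set.Ioo a₂ b₂})
    (P : E2) (hP : P ∈ O) (v : E2 → E2) (hv : ContDiffOn ℝ 1 v O) :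
    ((∀ x ∈ O, fderiv ℝ (fun y => v y 1) x (EuclideanSpace.single 0 1)
        = fderiv ℝ (fun y => v y 0) x (EuclideanSpace.single 1 1)) →
      ∃ φ : E2 → ℝ, ContDiffOn ℝ 1 φ O ∧ (∀ x ∈ O, HasGradientAt φ (v x) x) ∧
        ∀ x ∈ O, ∀ γ : ℝ → E2, IsCurveIn O P x γ →
          IntervalIntegrable (fun t => dot (v (γ t)) (deriv γ t)) volume 0 1 →
          φ x = ∫ t in (0:ℝ)..1, dot (v (γ t)) (deriv γ t)) ∧
    ((∀ x ∈ O, fderiv ℝ (fun y => v y 0) x (EuclideanSpace.single 0 1)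
        + fderiv ℝ (fun y => v y 1) x (EuclideanSpace.single 1 1) = 0) →
      ∃ ψ : E2 → ℝ, ContDiffOn ℝ 1 ψ O ∧
        (∀ x ∈ O, ∃ gx : E2, HasGradientAt ψ gx x ∧ perp gx = v x) ∧
        ∀ x ∈ O, ∀ γ : ℝ → E2, IsCurveIn O P x γ →
          IntervalIntegrable (fun t => dot (v (γ t)) (perp (deriv γ t))) volume 0 1 →
          ψ x = ∫ t in (0:ℝ)..1, dot (v (γ t)) (perp (deriv γ t))) := by
  subst hO
  have hOopen : IsOpen {x : E2 | x 0 ∈ Ioo a₁ b₁ ∧ x 1 ∈ Ioo a₂ b₂} :=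
    (isOpen_Ioo.prod isOpen_Ioo).preimage E2.toProd.continuous
  have hvd := hv.differentiableOn one_ne_zero
  constructor
  · intro hcurl
    obtain ⟨φ, hφP, hφ⟩ := exists_hasGradientAt_of_curl_eq_zero isOpen_Ioo ordConnected_Ioo
      isOpen_Ioo ordConnected_Ioo hvd hcurl hP
    refine ⟨φ, contDiffOn_one_of_hasGradientAt hOopen hφ hvd.continuousOn, hφ,
      fun x _ γ hγ hint => ?_⟩
    rw [integral_dot_deriv_eq_sub_of_isCurveIn hφ hγ hint, hφP, sub_zero]
  · intro hdiv
    have hw := hvd.neg_perp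
    obtain ⟨ψ, hψP, hψ⟩ := exists_hasGradientAt_of_curl_eq_zero isOpen_Ioo ordConnected_Ioo
      isOpen_Ioo ordConnected_Ioo hw
      (fun x hx => fderiv_neg_perp_comm_of_div_eq_zero (hdiv x hx)) hP
    refine ⟨ψ, contDiffOn_one_of_hasGradientAt hOopen hψ hw.continuousOn,
      fun x hx => ⟨_, hψ x hx, perp_neg_perp _⟩, fun x _ γ hγ hint => ?_⟩
    simp_rw [← dot_neg_perp] at hint ⊢
    rw [integral_dot_deriv_eq_sub_of_isCurveIn hψ hγ hint, hψP, sub_zero]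

/-- Poincaré's lemma on a rectangle, with explicit line-integral potentials:
for irrotational `v`, `φ(x) = ∫_{Γ_x} v₁ dx₁ + v₂ dx₂` is well defined (curve
independent) and `∇φ = v`; for solenoidal `v`, `ψ(x) = ∫_{Γ_x} v₁ dx₂ − v₂ dx₁`
is well defined and `∇^⊥ψ = v`. -/
theorem stmt9 (a₁ b₁ a₂ b₂ : ℝ) (h1 : a₁ < b₁) (h2 : a₂ < b₂)
    (O : Set E2) (hO : O = {x : E2 | x 0 ∈ Set.Ioo a₁ b₁ ∧ x 1 ∈ Set.Ioo a₂ b₂})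
    (P : E2) (hP : P ∈ O) (v : E2 → E2) (hv : ContDiffOn ℝ 1 v O) :
    ((∀ x ∈ O, fderiv ℝ (fun y => v y 1) x (EuclideanSpace.single 0 1)
        = fderiv ℝ (fun y => v y 0) x (EuclideanSpace.single 1 1)) →
      ∃ φ : E2 → ℝ, ContDiffOn ℝ 1 φ O ∧ (∀ x ∈ O, HasGradientAt φ (v x) x) ∧
        ∀ x ∈ O, ∀ γ : ℝ → E2, IsCurveIn O P x γ →
          IntervalIntegrable (fun t => dot (v (γ t)) (deriv γ t)) volume 0 1 →
          φ x = ∫ t in (0:ℝ)..1, dot (v (γ t)) (deriv γ t)) ∧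
    ((∀ x ∈ O, fderiv ℝ (fun y => v y 0) x (EuclideanSpace.single 0 1)
        + fderiv ℝ (fun y => v y 1) x (EuclideanSpace.single 1 1) = 0) →
      ∃ ψ : E2 → ℝ, ContDiffOn ℝ 1 ψ O ∧
        (∀ x ∈ O, ∃ gx : E2, HasGradientAt ψ gx x ∧ perp gx = v x) ∧
        ∀ x ∈ O, ∀ γ : ℝ → E2, IsCurveIn O P x γ →
          IntervalIntegrable (fun t => dot (v (γ t)) (perp (deriv γ t))) volume 0 1 →
          ψ x = ∫ t in (0:ℝ)..1, dot (v (γ t)) (perp (deriv γ t))) :=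
  stmt9_general a₁ b₁ a₂ b₂ O hO P hP v hv
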